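/- Under the family of linear maps f_t(e₁)=t e₁ + e₄, f_t(e₂)=(t²+1)e₂, f_t(e₃)=t(t²+1)e₃, f_t(e₄)=t e₁ + t e₄ applied to the Jordan algebra φ₂ (φ₂(e₁,e₁)=e₂, φ₂(e₁,e₂)=e₃, φ₂(e₄,e₄)=e₂), the limit as t→0 of f_t⁻¹∘φ₂∘(f_t×f_t) exists and defines the Jordan algebra φ₅ with φ₅(e₁,e₁)=e₂, φ₅(e₁,e₂)=e₃, φ₅(e₂,e₄)=e₃; hence φ₅ is a contraction of φ₂. -/

import Mathlib

/-- Bilinearity of a plain product. -/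
def IsBilin (K : Type*) [Field K] {V : Type*} [AddCommGroup V] [Module K V]
    (φ : V → V → V) : Prop :=
  (∀ (a : K) (x y z : V), φ (a • x + y) z = a • φ x z + φ y z) ∧
  (∀ (a : K) (x y z : V), φ x (a • y + z) = a • φ x y + φ x z)

/-- Commutativity (symmetry) of the product. -/
def IsComm {V : Type*} (φ : V → V → V) : Prop := ∀ x y, φ x y = φ y x

/-- The Jordan identity. -/
def JordanId {V : Type*} (φ : V → V → V) : Prop :=
  ∀ x y, φ (φ x x) (φ x y) = φ x (φ (φ x x) y)

/-- Lower central series: `lcs K φ 0 = C¹ = V`, and `lcs K φ m` is the term `C^{m+1}`. -/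
def lcs (K : Type*) [Field K] {V : Type*} [AddCommGroup V] [Module K V]
    (φ : V → V → V) : ℕ → Submodule K V
  | 0 => ⊤
  | m + 1 => Submodule.span K {z | ∃ x ∈ lcs K φ m, ∃ y, z = φ x y}

/-- Nilpotency: some term of the lower central series vanishes. -/
def IsNilp (K : Type*) [Field K] {V : Type*} [AddCommGroup V] [Module K V]
    (φ : V → V → V) : Prop := ∃ k, lcs K φ k = ⊥
/-- φ₂(e₁,e₁)=e₂, φ₂(e₁,e₂)=e₃, φ₂(e₄,e₄)=e₂ on ℂ⁴. -/
def χ₂ (x y : Fin 4 → ℂ) : Fin 4 → ℂ :=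
  ![0, x 0 * y 0 + x 3 * y 3, x 0 * y 1 + x 1 * y 0, 0]

/-- φ₅(e₁,e₁)=e₂, φ₅(e₁,e₂)=e₃, φ₅(e₂,e₄)=e₃ on ℂ⁴. -/
def χ₅ (x y : Fin 4 → ℂ) : Fin 4 → ℂ :=
  ![0, x 0 * y 0, x 0 * y 1 + x 1 * y 0 + x 1 * y 3 + x 3 * y 1, 0]

/-- f_t(e₁)=t e₁ + e₄, f_t(e₂)=(t²+1)e₂, f_t(e₃)=t(t²+1)e₃, f_t(e₄)=t e₁ + t e₄. -/
def ft (t : ℂ) (x : Fin 4 → ℂ) : Fin 4 → ℂ :=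
  ![t * x 0 + t * x 3, (t ^ 2 + 1) * x 1, t * (t ^ 2 + 1) * x 2, x 0 + t * x 3]

/-- The inverse family f_t⁻¹. -/
noncomputable def gt (t : ℂ) (y : Fin 4 → ℂ) : Fin 4 → ℂ :=
  ![(y 3 - y 0) / (1 - t), y 1 / (t ^ 2 + 1), y 2 / (t * (t ^ 2 + 1)),
    (y 0 - t * y 3) / (t * (1 - t))]

/-! Written out in coordinates, `f_t⁻¹ φ₂(f_t x, f_t y)` has vanishing `e₁`- and `e₄`-components,
and in its `e₃`-component the factor `t(t² + 1)` of `f_t(e₃)` cancels exactly against the factors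
`t` and `t² + 1` produced by `f_t(e₁)`, `f_t(e₄)` and `f_t(e₂)`. What remains is a rational function
of `t` that is regular at `t = 0`, and its value there is `φ₅(x, y)`. -/

open Filter Topology

noncomputable def χ₂Conj (t : ℂ) (x y : Fin 4 → ℂ) : Fin 4 → ℂ :=
  ![0, (t ^ 2 * (x 0 + x 3) * (y 0 + y 3) + (x 0 + t * x 3) * (y 0 + t * y 3)) / (t ^ 2 + 1),
    x 0 * y 1 + x 1 * y 0 + x 1 * y 3 + x 3 * y 1, 0]

theorem gt_ft {t : ℂ} (ht0 : t ≠ 0) (ht1 : t ≠ 1) (ht2 : t ^ 2 + 1 ≠ 0) (x : Fin 4 → ℂ) :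
    gt t (ft t x) = x := by
  have h1 : (1 : ℂ) - t ≠ 0 := sub_ne_zero_of_ne ht1.symm
  funext i; fin_cases i <;> simp [gt, ft] <;> field_simp
  ring

theorem ft_gt {t : ℂ} (ht0 : t ≠ 0) (ht1 : t ≠ 1) (ht2 : t ^ 2 + 1 ≠ 0) (x : Fin 4 → ℂ) :
    ft t (gt t x) = x := by
  have h1 : (1 : ℂ) - t ≠ 0 := sub_ne_zero_of_ne ht1.symm
  funext i; fin_cases i <;> simp [gt, ft] <;> field_simp <;> ring

theorem gt_χ₂_ft {t : ℂ} (ht0 : t ≠ 0) (ht2 : t ^ 2 + 1 ≠ 0) (x y : Fin 4 → ℂ) :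
    gt t (χ₂ (ft t x) (ft t y)) = χ₂Conj t x y := by
  funext i; fin_cases i <;> simp [gt, χ₂, ft, χ₂Conj] <;> field_simp
  ring

theorem χ₂Conj_zero (x y : Fin 4 → ℂ) : χ₂Conj 0 x y = χ₅ x y := by
  funext i; fin_cases i <;> simp [χ₂Conj, χ₅]

theorem continuousAt_χ₂Conj (x y : Fin 4 → ℂ) : ContinuousAt (fun t => χ₂Conj t x y) 0 := by
  rw [continuousAt_pi]
  intro i; fin_cases i <;> simp only [χ₂Conj] <;> fun_prop (disch := norm_num)

theorem eventually_sq_add_one_ne_zero : ∀ᶠ t in 𝓝 (0 : ℂ), t ^ 2 + 1 ≠ 0 :=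
  (show ContinuousAt (fun t : ℂ => t ^ 2 + 1) 0 by fun_prop).eventually_ne (by norm_num)

/-- φ₅ is a contraction of φ₂ by the family f_t. -/
theorem chi_five_contraction_of_chi_two :
    (∀ t : ℂ, t ≠ 0 → t ≠ 1 → t ^ 2 + 1 ≠ 0 →
      ∀ x, gt t (ft t x) = x ∧ ft t (gt t x) = x) ∧
    ∀ x y : Fin 4 → ℂ,
      Filter.Tendsto (fun t : ℂ => gt t (χ₂ (ft t x) (ft t y)))
        (nhdsWithin 0 {(0 : ℂ)}ᶜ) (nhds (χ₅ x y)) := by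
  refine ⟨fun t ht0 ht1 ht2 x => ⟨gt_ft ht0 ht1 ht2 x, ft_gt ht0 ht1 ht2 x⟩, fun x y => ?_⟩
  have hconj : ∀ᶠ t in 𝓝[≠] 0, χ₂Conj t x y = gt t (χ₂ (ft t x) (ft t y)) := by
    filter_upwards [self_mem_nhdsWithin, nhdsWithin_le_nhds eventually_sq_add_one_ne_zero]
      with t ht0 ht2
    exact (gt_χ₂_ft ht0 ht2 x y).symm
  rw [← χ₂Conj_zero]
  exact ((continuousAt_χ₂Conj x y).tendsto.mono_left nhdsWithin_le_nhds).congr' hconj
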